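/- There exists a sublinear Markov semigroup (T_t)_{t≥0} (namely T_t f(x) = sup_{|s|≤t} f(x+s) on C_b^{uc}(R)) and a function f in the domain D(A) of its strong generator such that T_1 f ∉ D(A); in particular the domain of the strong generator of a sublinear Markov semigroup need not be invariant under the semigroup. -/

import Mathlib

open Filter Topology

/-- The sublinear operator `T_t f(x) = sup_{|s| ≤ t} f(x+s)`. -/
noncomputable def shiftSup (t : ℝ) (f : ℝ → ℝ) (x : ℝ) : ℝ :=
  sSup ((fun s => f (x + s)) '' Set.Icc (-t) t)

/-- Bounded uniformly continuous functions on ℝ. -/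
def IsBUC (f : ℝ → ℝ) : Prop := UniformContinuous f ∧ ∃ C, ∀ x, |f x| ≤ C

/-- `f` belongs to the domain of the strong generator of the semigroup
`T_t f(x) = sup_{|s|≤t} f(x+s)` on `C_b^{uc}(ℝ)`: `(T_t f - f)/t` converges uniformly
to some `g ∈ C_b^{uc}(ℝ)` as `t ↓ 0`. -/
def InStrongDomain (f : ℝ → ℝ) : Prop :=
  IsBUC f ∧ ∃ g : ℝ → ℝ, IsBUC g ∧
    ∀ ε > (0 : ℝ), ∃ δ > (0 : ℝ), ∀ t, 0 < t → t < δ →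
      ∀ x, |(shiftSup t f x - f x) / t - g x| ≤ ε

/-!
If `f` has an `L`-Lipschitz derivative, Taylor's bound `|f (x + s) - f x - s f' x| ≤ L s²` shows
`T_t f x = f x + t |f' x| + O(t²)` uniformly in `x`, so a bounded such `f` with bounded `f'` lies in
the domain of the generator, with `A f = |f'|`. The piecewise quadratic `profile` is of this kind.
It equals `-y` on `[-2, -1]`, is at most `1` on `[-1, ∞)` and reaches `1` at `1/2`, so
`h = T_1 profile` is `1 - x` just left of `0` and `1` just right of it. The difference quotients
`(T_t h - h) / t` are then `1` at `-t` and `0` at `t`; if they converged uniformly to a continuous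
limit, both would tend to its value at `0`.
-/

open Set
open scoped NNReal

section ShiftSup

variable {f : ℝ → ℝ} {t x c : ℝ}

theorem shiftSup_le (ht : 0 ≤ t) (h : ∀ s ∈ Icc (-t) t, f (x + s) ≤ c) : shiftSup t f x ≤ c :=
  csSup_le ⟨f (x + 0), 0, ⟨by linarith, ht⟩, rfl⟩ (forall_mem_image.2 h)

theorem le_shiftSup (h : ∀ s ∈ Icc (-t) t, f (x + s) ≤ c) {s : ℝ} (hs : s ∈ Icc (-t) t) :
    f (x + s) ≤ shiftSup t f x :=
  le_csSup ⟨c, forall_mem_image.2 h⟩ (mem_image_of_mem _ hs)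

theorem shiftSup_eq {s₀ : ℝ} (hs₀ : s₀ ∈ Icc (-t) t) (h₀ : f (x + s₀) = c)
    (h : ∀ s ∈ Icc (-t) t, f (x + s) ≤ c) : shiftSup t f x = c :=
  IsGreatest.csSup_eq ⟨⟨s₀, hs₀, h₀⟩, forall_mem_image.2 h⟩

end ShiftSup

def HasLipschitzDeriv (K : ℝ≥0) (f f' : ℝ → ℝ) : Prop :=
  (∀ x, HasDerivAt f (f' x) x) ∧ LipschitzWith K f'

section LipschitzDeriv

variable {K : ℝ≥0} {f f' : ℝ → ℝ}

theorem hasLipschitzDeriv_of_quadratic (a b c : ℝ) (hf : ∀ y, f y = a + b * y + c * y ^ 2)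
    (hf' : ∀ y, f' y = b + 2 * c * y) (hc : |2 * c| ≤ K) : HasLipschitzDeriv K f f' := by
  obtain rfl : f = fun y => a + b * y + c * y ^ 2 := funext hf
  obtain rfl : f' = fun y => b + 2 * c * y := funext hf'
  refine ⟨fun x => ?_, LipschitzWith.of_dist_le_mul fun x y => ?_⟩
  · exact ((((hasDerivAt_id' x).const_mul b).const_add a).add
      ((hasDerivAt_pow 2 x).const_mul c)).congr_deriv (by ring)
  · rw [Real.dist_eq, Real.dist_eq, show b + 2 * c * x - (b + 2 * c * y) = 2 * c * (x - y) by ring,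
      abs_mul]
    exact mul_le_mul_of_nonneg_right hc (abs_nonneg _)

theorem hasDerivAt_ite_le {F G F' G' : ℝ → ℝ} {a : ℝ} (hF : ∀ x, HasDerivAt F (F' x) x)
    (hG : ∀ x, HasDerivAt G (G' x) x) (hval : F a = G a) (hder : F' a = G' a) (x : ℝ) :
    HasDerivAt (fun y => if y ≤ a then F y else G y) (if x ≤ a then F' x else G' x) x := by
  rcases lt_trichotomy x a with hxa | rfl | hxa
  · rw [if_pos hxa.le]
    refine (hF x).congr_of_eventuallyEq ?_
    filter_upwards [Iio_mem_nhds hxa] with y hy using if_pos (le_of_lt hy)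
  · rw [if_pos le_rfl]
    have hleft : HasDerivWithinAt (fun y => if y ≤ x then F y else G y) (F' x) (Iic x) x :=
      (hF x).hasDerivWithinAt.congr (fun y hy => if_pos hy) (if_pos le_rfl)
    have hright : HasDerivWithinAt (fun y => if y ≤ x then F y else G y) (F' x) (Ici x) x := by
      refine hder ▸ (hG x).hasDerivWithinAt.congr (fun y hy => ?_) (by simp [hval])
      rcases (mem_Ici.1 hy).eq_or_lt with rfl | hxy
      · simp [hval]
      · exact if_neg hxy.not_ge
    simpa [Iic_union_Ici] using hleft.union hright
  · rw [if_neg hxa.not_ge]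
    refine (hG x).congr_of_eventuallyEq ?_
    filter_upwards [Ioi_mem_nhds hxa] with y hy using if_neg (not_le.2 hy)

theorem LipschitzWith.ite_le {F G : ℝ → ℝ} {a : ℝ} (hF : LipschitzWith K F)
    (hG : LipschitzWith K G) (hval : F a = G a) :
    LipschitzWith K fun y => if y ≤ a then F y else G y := by
  have across : ∀ x y, x ≤ a → a < y → dist (F x) (G y) ≤ K * dist x y := fun x y hx hy =>
    calc dist (F x) (G y) ≤ dist (F x) (F a) + dist (G a) (G y) := hval ▸ dist_triangle _ _ _
      _ ≤ K * dist x a + K * dist a y := add_le_add (hF.dist_le_mul _ _) (hG.dist_le_mul _ _)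
      _ = K * dist x y := by
        simp only [Real.dist_eq, abs_of_nonpos (sub_nonpos.2 hx),
          abs_of_nonpos (sub_nonpos.2 hy.le), abs_of_nonpos (sub_nonpos.2 (hx.trans hy.le))]
        ring
  refine LipschitzWith.of_dist_le_mul fun x y => ?_
  rcases le_or_gt x a with hx | hx <;> rcases le_or_gt y a with hy | hy <;> simp only [hx, hy,
    if_true, if_false, not_le.2]
  · exact hF.dist_le_mul x y
  · exact across x y hx hy
  · rw [dist_comm, dist_comm x]; exact across y x hy hx
  · exact hG.dist_le_mul x y

theorem HasLipschitzDeriv.ite_le {F G F' G' : ℝ → ℝ} {a : ℝ} (hF : HasLipschitzDeriv K F F')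
    (hG : HasLipschitzDeriv K G G') (hval : F a = G a) (hder : F' a = G' a) :
    HasLipschitzDeriv K (fun y => if y ≤ a then F y else G y)
      (fun y => if y ≤ a then F' y else G' y) :=
  ⟨hasDerivAt_ite_le hF.1 hG.1 hval hder, hF.2.ite_le hG.2 hder⟩

theorem HasLipschitzDeriv.abs_sub_sub_le (hf : HasLipschitzDeriv K f f') (x s : ℝ) :
    |f (x + s) - f x - s * f' x| ≤ K * s ^ 2 := by
  have hφ : ∀ u ∈ uIcc x (x + s), HasDerivWithinAt (fun u => f u - u * f' x) (f' u - f' x)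
      (uIcc x (x + s)) u := fun u _ =>
    ((hf.1 u).sub (by simpa using (hasDerivAt_id u).mul_const (f' x))).hasDerivWithinAt
  have hbound : ∀ u ∈ uIcc x (x + s), ‖f' u - f' x‖ ≤ K * |s| := fun u hu =>
    calc ‖f' u - f' x‖ ≤ K * |u - x| := by simpa [Real.dist_eq] using hf.2.dist_le_mul u x
      _ ≤ K * |s| := by
        refine mul_le_mul_of_nonneg_left ?_ K.2
        simpa using abs_sub_left_of_mem_uIcc hu
  have := (convex_uIcc x (x + s)).norm_image_sub_le_of_norm_hasDerivWithin_le hφ hbound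
    left_mem_uIcc right_mem_uIcc
  rw [Real.norm_eq_abs, Real.norm_eq_abs, add_sub_cancel_left, mul_assoc, ← sq, sq_abs] at this
  convert this using 2; ring

theorem HasLipschitzDeriv.abs_shiftSup_sub_le (hf : HasLipschitzDeriv K f f') {t : ℝ} (ht : 0 ≤ t)
    (x : ℝ) : |shiftSup t f x - f x - (t * |f' x|)| ≤ K * t ^ 2 := by
  have upper : ∀ s ∈ Icc (-t) t, f (x + s) ≤ f x + t * |f' x| + K * t ^ 2 := fun s hs => by
    have hs' : |s| ≤ t := abs_le.2 hs
    have taylor := (abs_le.1 (hf.abs_sub_sub_le x s)).2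
    have linear : s * f' x ≤ t * |f' x| := (le_abs_self _).trans <| by
      rw [abs_mul]; exact mul_le_mul_of_nonneg_right hs' (abs_nonneg _)
    have quadratic : K * s ^ 2 ≤ K * t ^ 2 := by
      rw [← sq_abs s]; exact mul_le_mul_of_nonneg_left (pow_le_pow_left₀ (abs_nonneg s) hs' 2) K.2
    linarith
  set s₀ := if 0 ≤ f' x then t else -t
  have hs₀ : s₀ ∈ Icc (-t) t := by simp only [s₀]; split_ifs <;> constructor <;> linarith
  have lower : f x + t * |f' x| - K * t ^ 2 ≤ f (x + s₀) := by
    have taylor := (abs_le.1 (hf.abs_sub_sub_le x s₀)).1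
    have hs₀' : s₀ * f' x = t * |f' x| ∧ s₀ ^ 2 = t ^ 2 := by
      simp only [s₀]; split_ifs with h
      · simp [abs_of_nonneg h]
      · simp [abs_of_neg (not_le.1 h)]
    rw [hs₀'.1, hs₀'.2] at taylor
    linarith
  rw [abs_le]; constructor
  · linarith [le_shiftSup upper hs₀]
  · linarith [shiftSup_le ht upper]

theorem HasLipschitzDeriv.inStrongDomain (hf : HasLipschitzDeriv K f f')
    (hf_bdd : ∃ C, ∀ x, |f x| ≤ C) {M : ℝ≥0} (hf'_bdd : ∀ x, |f' x| ≤ M) : InStrongDomain f := by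
  have hLip : LipschitzWith M f := lipschitzWith_of_nnnorm_deriv_le
    (fun x => (hf.1 x).differentiableAt) fun x => by
      rw [(hf.1 x).deriv, ← NNReal.coe_le_coe, coe_nnnorm, Real.norm_eq_abs]; exact hf'_bdd x
  refine ⟨⟨hLip.uniformContinuous, hf_bdd⟩, fun x => |f' x|,
    ⟨Real.uniformContinuous_abs.comp hf.2.uniformContinuous, M,
      fun x => (abs_abs _).trans_le (hf'_bdd x)⟩,
    fun ε hε => ⟨ε / (K + 1), by positivity, fun t ht htδ x => ?_⟩⟩
  rw [div_sub' ht.ne', abs_div, abs_of_pos ht, div_le_iff₀ ht]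
  calc |shiftSup t f x - f x - (t * |f' x|)| ≤ K * t ^ 2 := hf.abs_shiftSup_sub_le ht.le x
    _ ≤ t * (K + 1) * t := by nlinarith
    _ ≤ ε * t := by
      gcongr
      exact ((lt_div_iff₀ (by positivity)).1 htδ).le

end LipschitzDeriv

theorem InStrongDomain.exists_tendstoUniformly {h : ℝ → ℝ} (hh : InStrongDomain h) :
    ∃ g : ℝ → ℝ, Continuous g ∧
      TendstoUniformly (fun t x => (shiftSup t h x - h x) / t) g (𝓝[>] 0) := by
  obtain ⟨-, g, ⟨hg, -⟩, hconv⟩ := hh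
  refine ⟨g, hg.continuous, Metric.tendstoUniformly_iff.2 fun ε hε => ?_⟩
  obtain ⟨δ, hδ, hδconv⟩ := hconv (ε / 2) (half_pos hε)
  filter_upwards [Ioo_mem_nhdsGT hδ] with t ht x
  rw [dist_comm, Real.dist_eq]
  exact (hδconv t ht.1 ht.2 x).trans_lt (half_lt_self hε)

theorem not_inStrongDomain_of_tendsto {h x y : ℝ → ℝ} {a b c : ℝ}
    (hx : Tendsto x (𝓝[>] 0) (𝓝 a)) (hy : Tendsto y (𝓝[>] 0) (𝓝 a))
    (hb : Tendsto (fun t => (shiftSup t h (x t) - h (x t)) / t) (𝓝[>] 0) (𝓝 b))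
    (hc : Tendsto (fun t => (shiftSup t h (y t) - h (y t)) / t) (𝓝[>] 0) (𝓝 c)) (hbc : b ≠ c) :
    ¬ InStrongDomain h := fun hh => by
  obtain ⟨g, hg, hconv⟩ := hh.exists_tendstoUniformly
  exact hbc <| (tendsto_nhds_unique hb (hconv.tendsto_comp hg.continuousAt hx)).trans
    (tendsto_nhds_unique (hconv.tendsto_comp hg.continuousAt hy) hc)

noncomputable def profile (y : ℝ) : ℝ :=
  if y ≤ -3 then 5 / 2
  else if y ≤ -2 then 5 / 2 - (y + 3) ^ 2 / 2
  else if y ≤ -1 then -y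
  else if y ≤ 0 then -y + 5 / 6 * (y + 1) ^ 2
  else if y ≤ 1 / 2 then 1 - 2 / 3 * (y - 1 / 2) ^ 2
  else 1

noncomputable def profileDeriv (y : ℝ) : ℝ :=
  if y ≤ -3 then 0
  else if y ≤ -2 then -(y + 3)
  else if y ≤ -1 then -1
  else if y ≤ 0 then 5 / 3 * (y + 1) - 1
  else if y ≤ 1 / 2 then -4 / 3 * (y - 1 / 2)
  else 0

theorem hasLipschitzDeriv_profile : HasLipschitzDeriv 2 profile profileDeriv := by
  refine .ite_le ?_ (.ite_le ?_ (.ite_le ?_ (.ite_le ?_ (.ite_le ?_ ?_ ?_ ?_) ?_ ?_) ?_ ?_) ?_ ?_)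
    ?_ ?_
  · exact hasLipschitzDeriv_of_quadratic (5 / 2) 0 0 (by intro; ring) (by intro; ring) (by norm_num)
  · exact hasLipschitzDeriv_of_quadratic (-2) (-3) (-1 / 2) (by intro; ring) (by intro; ring)
      (by norm_num)
  · exact hasLipschitzDeriv_of_quadratic 0 (-1) 0 (by intro; ring) (by intro; ring) (by norm_num)
  · exact hasLipschitzDeriv_of_quadratic (5 / 6) (2 / 3) (5 / 6) (by intro; ring) (by intro; ring)
      (by norm_num)
  · exact hasLipschitzDeriv_of_quadratic (5 / 6) (2 / 3) (-2 / 3) (by intro; ring) (by intro; ring)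
      (by norm_num)
  · exact hasLipschitzDeriv_of_quadratic 1 0 0 (by intro; ring) (by intro; ring) (by norm_num)
  all_goals norm_num

theorem abs_profile_le (y : ℝ) : |profile y| ≤ 5 / 2 := by
  unfold profile
  split_ifs <;> rw [abs_le] <;> constructor <;> nlinarith

theorem abs_profileDeriv_le (y : ℝ) : |profileDeriv y| ≤ 1 := by
  unfold profileDeriv
  split_ifs <;> rw [abs_le] <;> constructor <;> linarith

theorem profile_le_one {y : ℝ} (hy : -1 ≤ y) : profile y ≤ 1 := by
  unfold profile
  split_ifs <;> nlinarith

theorem profile_eq_neg {y : ℝ} (h₁ : -2 < y) (h₂ : y ≤ -1) : profile y = -y := by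
  rw [profile, if_neg (by linarith), if_neg (by linarith), if_pos h₂]

theorem shiftSup_one_profile_of_nonpos {x : ℝ} (h₁ : -1 / 4 ≤ x) (h₂ : x ≤ 0) :
    shiftSup 1 profile x = 1 - x := by
  refine shiftSup_eq (s₀ := -1) (by norm_num) ?_ fun s hs => ?_
  · rw [profile_eq_neg (by linarith) (by linarith)]; ring
  · rcases le_or_gt (x + s) (-1) with hxs | hxs
    · rw [profile_eq_neg (by linarith [hs.1]) hxs]; linarith [hs.1]
    · linarith [profile_le_one hxs.le]

theorem shiftSup_one_profile_of_nonneg {x : ℝ} (h₁ : 0 ≤ x) (h₂ : x ≤ 1 / 4) :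
    shiftSup 1 profile x = 1 := by
  refine shiftSup_eq (s₀ := 1 / 2 - x) ⟨by linarith, by linarith⟩ ?_ fun s hs =>
    profile_le_one (by linarith [hs.1])
  rw [add_sub_cancel]; norm_num [profile]

theorem shiftSup_shiftSup_one_profile_neg {t : ℝ} (h₀ : 0 < t) (h₁ : t ≤ 1 / 8) :
    shiftSup t (shiftSup 1 profile) (-t) = 1 + 2 * t := by
  refine shiftSup_eq (s₀ := -t) ⟨le_rfl, by linarith⟩ ?_ fun s hs => ?_
  · rw [shiftSup_one_profile_of_nonpos (by linarith) (by linarith)]; ring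
  · rw [shiftSup_one_profile_of_nonpos (by linarith [hs.1]) (by linarith [hs.2])]
    linarith [hs.1]

theorem shiftSup_shiftSup_one_profile_pos {t : ℝ} (h₀ : 0 < t) (h₁ : t ≤ 1 / 8) :
    shiftSup t (shiftSup 1 profile) t = 1 :=
  shiftSup_eq (s₀ := 0) ⟨by linarith, h₀.le⟩
    (shiftSup_one_profile_of_nonneg (by linarith) (by linarith)) fun s hs =>
    (shiftSup_one_profile_of_nonneg (by linarith [hs.1]) (by linarith [hs.2])).le

/-- the domain of the strong generator of a sublinear Markov semigroup need not
be invariant under the semigroup: for `T_t f(x) = sup_{|s|≤t} f(x+s)` there is `f` in the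
domain with `T_1 f` not in the domain. -/
theorem strong_domain_not_invariant :
    ∃ f : ℝ → ℝ, InStrongDomain f ∧ ¬ InStrongDomain (shiftSup 1 f) := by
  refine ⟨profile, hasLipschitzDeriv_profile.inStrongDomain ⟨5 / 2, abs_profile_le⟩ (M := 1)
    (by simpa using abs_profileDeriv_le), ?_⟩
  have small : ∀ᶠ t in 𝓝[>] (0 : ℝ), t ∈ Ioo 0 (1 / 8) := Ioo_mem_nhdsGT (by norm_num)
  have left : Tendsto
      (fun t => (shiftSup t (shiftSup 1 profile) (-t) - shiftSup 1 profile (-t)) / t)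
      (𝓝[>] 0) (𝓝 1) := by
    refine tendsto_const_nhds.congr' ?_
    filter_upwards [small] with t ⟨h₀, h₁⟩
    rw [shiftSup_shiftSup_one_profile_neg h₀ h₁.le,
      shiftSup_one_profile_of_nonpos (by linarith) (by linarith)]
    field_simp; ring
  have right : Tendsto
      (fun t => (shiftSup t (shiftSup 1 profile) t - shiftSup 1 profile t) / t)
      (𝓝[>] 0) (𝓝 0) := by
    refine tendsto_const_nhds.congr' ?_
    filter_upwards [small] with t ⟨h₀, h₁⟩
    rw [shiftSup_shiftSup_one_profile_pos h₀ h₁.le,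
      shiftSup_one_profile_of_nonneg h₀.le (by linarith), sub_self, zero_div]
  exact not_inStrongDomain_of_tendsto ((continuous_neg.tendsto' 0 0 neg_zero).mono_left
    nhdsWithin_le_nhds) (tendsto_id.mono_left nhdsWithin_le_nhds) left right one_ne_zero
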